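/- Let G be a d-connected graph and fix an ordered pair of vertices u, v. On the set of (u,v)-separating d-separators of G, define S ⪯ T if T−S lies in the same component of G−S as v. Then ⪯ is a partial order, and two (u,v)-separating d-separators are comparable in this order if and only if they are noncrossing. -/

import Mathlib

variable {V : Type*}

/-- `u` and `v` lie in the same component of `G − S`. -/
def ReachOutside (G : SimpleGraph V) (S : Set V) (u v : V) : Prop :=
  ∃ (hu : u ∈ Sᶜ) (hv : v ∈ Sᶜ), (G.induce Sᶜ).Reachable ⟨u, hu⟩ ⟨v, hv⟩

/-- `S` is a separator of `G`: `G − S` is disconnected. -/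
def IsSeparator (G : SimpleGraph V) (S : Set V) : Prop :=
  ∃ u v, u ∉ S ∧ v ∉ S ∧ ¬ ReachOutside G S u v

/-- `S` is a `d`-separator of `G`. -/
def IsdSeparator (G : SimpleGraph V) (d : ℕ) (S : Set V) : Prop :=
  S.ncard = d ∧ IsSeparator G S

/-- `S` separates `u` from `v` in `G`. -/
def SeparatesPair (G : SimpleGraph V) (S : Set V) (u v : V) : Prop :=
  u ∉ S ∧ v ∉ S ∧ ¬ ReachOutside G S u v

/-- `S` crosses `T`: `S` contains vertices of at least two components of `G − T`. -/
def Crosses (G : SimpleGraph V) (S T : Set V) : Prop :=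
  ∃ s₁ s₂, s₁ ∈ S ∧ s₂ ∈ S ∧ s₁ ∉ T ∧ s₂ ∉ T ∧ ¬ ReachOutside G T s₁ s₂

def Noncrossing (G : SimpleGraph V) (S T : Set V) : Prop :=
  ¬ Crosses G S T ∧ ¬ Crosses G T S

/-- `G` is `d`-connected. -/
def dConnected [Fintype V] (G : SimpleGraph V) (d : ℕ) : Prop :=
  d + 1 ≤ Fintype.card V ∧ ∀ S : Set V, S.ncard < d → ¬ IsSeparator G S

/-- the neighbours of `X` outside `X`. -/
def nbhd (G : SimpleGraph V) (X : Set V) : Set V :=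
  {v | v ∉ X ∧ ∃ x ∈ X, G.Adj x v}

/-- the complement `V − X − N_G(X)` of a fragment. -/
def fragCompl (G : SimpleGraph V) (X : Set V) : Set V :=
  (X ∪ nbhd G X)ᶜ

/-- `X` is a `d`-fragment of `G`. -/
def IsFragment (G : SimpleGraph V) (d : ℕ) (X : Set V) : Prop :=
  X.Nonempty ∧ (nbhd G X).ncard = d ∧ (fragCompl G X).Nonempty

/-- the fragment `X` is `(u,v)`-separating. -/
def FragSeparates (G : SimpleGraph V) (X : Set V) (u v : V) : Prop :=
  (u ∈ X ∧ v ∈ fragCompl G X) ∨ (v ∈ X ∧ u ∈ fragCompl G X)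

/-- there exist `k` pairwise internally disjoint `u`–`v` paths in `G`. -/
def HasIntDisjPaths (G : SimpleGraph V) (u v : V) (k : ℕ) : Prop :=
  ∃ f : Fin k → G.Path u v, Function.Injective f ∧
    ∀ i j, i ≠ j → ∀ x, x ∈ (f i).1.support → x ∈ (f j).1.support → x = u ∨ x = v

/-- `κ(G,u,v)`: the maximum number of pairwise internally disjoint `u`–`v` paths. -/
noncomputable def localConn (G : SimpleGraph V) (u v : V) : ℕ :=
  sSup {k | HasIntDisjPaths G u v k}

/-!
Write `S ⪯ T` when `T − S` lies in the component of `v` in `G − S`. The engine is that every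
vertex of a `d`-separator `T` of a `d`-connected graph has a neighbour in each of the components
of `G − T` containing `u` and `v`, since `T` minus that vertex no longer separates them. If
`S ⪯ T`, the component of `u` in `G − S` avoids `T`, so every vertex of `S − T` reaches `u`
in `G − T`; symmetrically the component of `v` in `G − T` avoids `S`. Antisymmetry,
transitivity and "comparable ⇒ noncrossing" follow directly. Conversely, if `S` does not cross
`T` and `T ⋠ S`, then all of `S − T` lies in a component of `G − T` other than that of `v`, so
that component avoids `S`, and every vertex of `T − S` reaches `v` in `G − S`, i.e. `S ⪯ T`.
-/

variable {G : SimpleGraph V} {S T : Set V} {a b c t u v : V}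

namespace ReachOutside

theorem refl (ha : a ∉ S) : ReachOutside G S a a := ⟨ha, ha, .rfl⟩

theorem symm (h : ReachOutside G S a b) : ReachOutside G S b a :=
  let ⟨ha, hb, hr⟩ := h
  ⟨hb, ha, hr.symm⟩

theorem trans (h₁ : ReachOutside G S a b) (h₂ : ReachOutside G S b c) :
    ReachOutside G S a c :=
  let ⟨ha, _, hr₁⟩ := h₁
  let ⟨_, hc, hr₂⟩ := h₂
  ⟨ha, hc, hr₁.trans hr₂⟩

theorem left_notMem (h : ReachOutside G S a b) : a ∉ S := h.1

theorem right_notMem (h : ReachOutside G S a b) : b ∉ S := h.2.1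

theorem adj_right (h : ReachOutside G S a b) (hc : c ∉ S) (hbc : G.Adj b c) :
    ReachOutside G S a c :=
  h.trans ⟨h.right_notMem, hc, SimpleGraph.Adj.reachable (G := G.induce Sᶜ) hbc⟩

theorem induction {P : V → Prop} (h : ReachOutside G S a b) (ha : P a)
    (step : ∀ x y, ReachOutside G S a x → P x → G.Adj x y → y ∉ S → P y) : P b := by
  obtain ⟨ha', _, hr⟩ := h
  suffices ∀ y : ↥Sᶜ, Relation.ReflTransGen (G.induce Sᶜ).Adj ⟨a, ha'⟩ y → P y from
    this _ ((SimpleGraph.reachable_iff_reflTransGen _ _).1 hr)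
  intro y hy
  induction hy with
  | refl => exact ha
  | @tail x y hx hxy ih =>
    exact step x y ⟨ha', x.2, (SimpleGraph.reachable_iff_reflTransGen _ _).2 hx⟩ ih hxy y.2

theorem of_forall_notMem (h : ReachOutside G S a b)
    (hT : ∀ x, ReachOutside G S a x → x ∉ T) : ReachOutside G T a b :=
  h.induction (refl (hT a (refl h.left_notMem))) fun _ y hx hTx hxy hy =>
    hTx.adj_right (hT y (hx.adj_right hy hxy)) hxy

end ReachOutside

theorem SeparatesPair.symm (h : SeparatesPair G S u v) : SeparatesPair G S v u :=
  ⟨h.2.1, h.1, fun hvu => h.2.2 hvu.symm⟩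

theorem Noncrossing.symm (h : Noncrossing G S T) : Noncrossing G T S := ⟨h.2, h.1⟩

theorem SeparatesPair.exists_adj_reachOutside (hsep : SeparatesPair G T u v)
    (h : ReachOutside G (T \ {t}) v u) : ∃ w, G.Adj t w ∧ ReachOutside G T v w := by
  by_contra! hnone
  refine hsep.2.2 (h.induction (P := ReachOutside G T v) (.refl hsep.2.1) ?_).symm
  intro x y _ hx hxy hy
  by_cases hyt : y = t
  · exact absurd hx (hnone x (hyt ▸ hxy.symm))
  · exact hx.adj_right (fun hyT => hy ⟨hyT, hyt⟩) hxy

section dConnected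

variable [Fintype V] {d : ℕ}

theorem dConnected.reachOutside_diff_singleton (hG : dConnected G d) (hT : IsdSeparator G d T)
    (hsep : SeparatesPair G T u v) (ht : t ∈ T) : ReachOutside G (T \ {t}) u v := by
  by_contra h
  refine hG.2 _ ?_ ⟨u, v, fun hu => hsep.1 hu.1, fun hv => hsep.2.1 hv.1, h⟩
  have hpos := (Set.ncard_pos T.toFinite).2 ⟨t, ht⟩
  rw [Set.ncard_sdiff_singleton_of_mem ht, ← hT.1]
  omega

theorem dConnected.reachOutside_of_mem (hG : dConnected G d) (hT : IsdSeparator G d T)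
    (hsep : SeparatesPair G T u v) (ht : t ∈ T) (htS : t ∉ S)
    (havoid : ∀ x, ReachOutside G T v x → x ∉ S) : ReachOutside G S v t := by
  obtain ⟨w, htw, hw⟩ :=
    hsep.exists_adj_reachOutside (hG.reachOutside_diff_singleton hT hsep ht).symm
  exact (hw.of_forall_notMem havoid).adj_right htS htw.symm

end dConnected

def SepLE (G : SimpleGraph V) (v : V) (S T : Set V) : Prop :=
  ∀ w ∈ T \ S, ReachOutside G S w v

namespace SepLE

theorem component_left_avoids (hsS : SeparatesPair G S u v) (hle : SepLE G v S T) :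
    ∀ x, ReachOutside G S u x → x ∉ T :=
  fun x hx hxT => hsS.2.2 (hx.trans (hle x ⟨hxT, hx.right_notMem⟩))

variable [Fintype V] {d : ℕ}

theorem reachOutside_left_of_mem_diff (hG : dConnected G d) (hS : IsdSeparator G d S)
    (hsS : SeparatesPair G S u v) (hle : SepLE G v S T) {x : V} (hx : x ∈ S \ T) :
    ReachOutside G T u x :=
  hG.reachOutside_of_mem hS hsS.symm hx.1 hx.2 (hle.component_left_avoids hsS)

theorem component_right_avoids (hG : dConnected G d) (hS : IsdSeparator G d S)
    (hsS : SeparatesPair G S u v) (hsT : SeparatesPair G T u v) (hle : SepLE G v S T) :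
    ∀ y, ReachOutside G T v y → y ∉ S :=
  fun _ hy hyS =>
    hsT.2.2 ((hle.reachOutside_left_of_mem_diff hG hS hsS ⟨hyS, hy.right_notMem⟩).trans hy.symm)

theorem antisymm (hG : dConnected G d) (hS : IsdSeparator G d S) (hsS : SeparatesPair G S u v)
    (hT : IsdSeparator G d T) (hsT : SeparatesPair G T u v) (hST : SepLE G v S T)
    (hTS : SepLE G v T S) : S = T := by
  have hTS_sub : T ⊆ S := fun t ht => by
    by_contra htS
    exact hsS.2.2
      ((hTS.reachOutside_left_of_mem_diff hG hT hsT ⟨ht, htS⟩).trans (hST t ⟨ht, htS⟩))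
  exact (Set.eq_of_subset_of_ncard_le hTS_sub (by rw [hS.1, hT.1]) S.toFinite).symm

theorem trans (hG : dConnected G d) (hS : IsdSeparator G d S) (hsS : SeparatesPair G S u v)
    (hsT : SeparatesPair G T u v) {U : Set V} (hST : SepLE G v S T) (hTU : SepLE G v T U) :
    SepLE G v S U := by
  intro w hw
  by_cases hwT : w ∈ T
  · exact hST w ⟨hwT, hw.2⟩
  · exact ((hTU w ⟨hw.1, hwT⟩).symm.of_forall_notMem
      (hST.component_right_avoids hG hS hsS hsT)).symm

theorem noncrossing (hG : dConnected G d) (hS : IsdSeparator G d S)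
    (hsS : SeparatesPair G S u v) (hle : SepLE G v S T) : Noncrossing G S T :=
  ⟨fun ⟨_, _, h₁, h₂, h₁T, h₂T, hne⟩ =>
      hne ((hle.reachOutside_left_of_mem_diff hG hS hsS ⟨h₁, h₁T⟩).symm.trans
        (hle.reachOutside_left_of_mem_diff hG hS hsS ⟨h₂, h₂T⟩)),
    fun ⟨t₁, t₂, h₁, h₂, h₁S, h₂S, hne⟩ =>
      hne ((hle t₁ ⟨h₁, h₁S⟩).trans (hle t₂ ⟨h₂, h₂S⟩).symm)⟩

end SepLE

theorem sepLE_or_sepLE_of_not_crosses [Fintype V] {d : ℕ} (hG : dConnected G d)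
    (hT : IsdSeparator G d T) (hsT : SeparatesPair G T u v) (hnc : ¬Crosses G S T) :
    SepLE G v S T ∨ SepLE G v T S := by
  refine or_iff_not_imp_right.2 fun hTS => ?_
  obtain ⟨s, hs, hsv⟩ : ∃ s ∈ S \ T, ¬ReachOutside G T s v := by
    simpa only [SepLE, not_forall, exists_prop] using hTS
  have havoid : ∀ y, ReachOutside G T v y → y ∉ S := fun y hy hyS =>
    hnc ⟨s, y, hs.1, hyS, hs.2, hy.right_notMem, fun hsy => hsv (hsy.trans hy.symm)⟩
  exact fun t ht => (hG.reachOutside_of_mem hT hsT ht.1 ht.2 havoid).symm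

theorem stmt1 [Fintype V] (G : SimpleGraph V) (d : ℕ) (u v : V) (hG : dConnected G d) :
    -- reflexivity
    (∀ S : Set V, IsdSeparator G d S → SeparatesPair G S u v →
      ∀ w ∈ S \ S, ReachOutside G S w v) ∧
    -- antisymmetry
    (∀ S T : Set V, IsdSeparator G d S → SeparatesPair G S u v →
      IsdSeparator G d T → SeparatesPair G T u v →
      (∀ w ∈ T \ S, ReachOutside G S w v) → (∀ w ∈ S \ T, ReachOutside G T w v) → S = T) ∧
    -- transitivity
    (∀ S T U : Set V, IsdSeparator G d S → SeparatesPair G S u v →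
      IsdSeparator G d T → SeparatesPair G T u v →
      IsdSeparator G d U → SeparatesPair G U u v →
      (∀ w ∈ T \ S, ReachOutside G S w v) → (∀ w ∈ U \ T, ReachOutside G T w v) →
      (∀ w ∈ U \ S, ReachOutside G S w v)) ∧
    -- comparable iff noncrossing
    (∀ S T : Set V, IsdSeparator G d S → SeparatesPair G S u v →
      IsdSeparator G d T → SeparatesPair G T u v →
      (((∀ w ∈ T \ S, ReachOutside G S w v) ∨ (∀ w ∈ S \ T, ReachOutside G T w v)) ↔
        Noncrossing G S T)) := by
  refine ⟨fun S _ _ w hw => (hw.2 hw.1).elim, ?_, ?_, ?_⟩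
  · exact fun S T hS hsS hT hsT => SepLE.antisymm hG hS hsS hT hsT
  · exact fun S T U hS hsS _ hsT _ _ => SepLE.trans hG hS hsS hsT
  · intro S T hS hsS hT hsT
    refine ⟨?_, fun hnc => sepLE_or_sepLE_of_not_crosses hG hT hsT hnc.1⟩
    rintro (hle | hle)
    · exact SepLE.noncrossing hG hS hsS hle
    · exact (SepLE.noncrossing hG hT hsT hle).symm
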